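/- Let (𝒜, A, A') be a quasi-twilled associative algebra over a field K with projections p : 𝒜 → A and p' : 𝒜 → A' determined by the decomposition 𝒜 = A ⊕ A', and let D : A → A' be a linear map. Define e^D : 𝒜 → 𝒜 by e^D(a) = a + D(p(a)). Then: (1) e^D is a linear bijection with inverse a ↦ a − D(p(a)); (2) the bilinear operation Ω^D(a,b) := (e^D)^{-1}(e^D(a)·e^D(b)) on 𝒜 is associative; (3) e^D is an algebra isomorphism from (𝒜, Ω^D) to (𝒜, ·); (4) A' is closed under Ω^D, so ((𝒜, Ω^D), A, A') is again a quasi-twilled associative algebra. -/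

import Mathlib

/-- `e^D(a) = a + D(p(a))`, where `p` is the projection onto `A` along `A'`. -/
noncomputable def eD {K 𝓐 : Type*} [Field K] [AddCommGroup 𝓐] [Module K 𝓐]
    {A A' : Submodule K 𝓐} (hcompl : IsCompl A A') (D : A →ₗ[K] A') (a : 𝓐) : 𝓐 :=
  a + ((D (A.linearProjOfIsCompl A' hcompl a) : A') : 𝓐)

/-- `a ↦ a − D(p(a))`, the claimed inverse of `e^D`. -/
noncomputable def eDinv {K 𝓐 : Type*} [Field K] [AddCommGroup 𝓐] [Module K 𝓐]
    {A A' : Submodule K 𝓐} (hcompl : IsCompl A A') (D : A →ₗ[K] A') (a : 𝓐) : 𝓐 :=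
  a - ((D (A.linearProjOfIsCompl A' hcompl a) : A') : 𝓐)

/-- The twisted multiplication `Ω^D(a,b) = (e^D)⁻¹(e^D(a)·e^D(b))`. -/
noncomputable def OmegaD {K 𝓐 : Type*} [Field K] [AddCommGroup 𝓐] [Module K 𝓐]
    (m : 𝓐 →ₗ[K] 𝓐 →ₗ[K] 𝓐)
    {A A' : Submodule K 𝓐} (hcompl : IsCompl A A') (D : A →ₗ[K] A') (a b : 𝓐) : 𝓐 :=
  eDinv hcompl D (m (eD hcompl D a) (eD hcompl D b))

/-! The map `D ∘ p` takes values in `A' = ker p`, so it squares to zero and `e^D = 1 + D ∘ p`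
has inverse `1 - D ∘ p`. Then `Ω^D` is just the multiplication transported along `e^D`, hence
associative with `e^D` an isomorphism onto `(𝒜, ·)`; and `e^D` is the identity on `A'`, so `A'`
stays a subalgebra. -/

section TwistByD

variable {K 𝓐 : Type*} [Field K] [AddCommGroup 𝓐] [Module K 𝓐]
  {A A' : Submodule K 𝓐} (hcompl : IsCompl A A') (D : A →ₗ[K] A')

theorem eD_eq_add (a : 𝓐) : eD hcompl D a = a + D (A.projectionOnto A' hcompl a) := rfl

theorem eDinv_eq_sub (a : 𝓐) : eDinv hcompl D a = a - D (A.projectionOnto A' hcompl a) := rfl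

theorem projectionOnto_eD (a : 𝓐) :
    A.projectionOnto A' hcompl (eD hcompl D a) = A.projectionOnto A' hcompl a := by
  rw [eD_eq_add, map_add, Submodule.projectionOnto_apply_of_mem_right hcompl (D _).2, add_zero]

theorem projectionOnto_eDinv (a : 𝓐) :
    A.projectionOnto A' hcompl (eDinv hcompl D a) = A.projectionOnto A' hcompl a := by
  rw [eDinv_eq_sub, map_sub, Submodule.projectionOnto_apply_of_mem_right hcompl (D _).2, sub_zero]

theorem eDinv_eD (a : 𝓐) : eDinv hcompl D (eD hcompl D a) = a := by
  rw [eDinv_eq_sub, projectionOnto_eD, eD_eq_add, add_sub_cancel_right]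

theorem eD_eDinv (a : 𝓐) : eD hcompl D (eDinv hcompl D a) = a := by
  rw [eD_eq_add, projectionOnto_eDinv, eDinv_eq_sub, sub_add_cancel]

theorem eD_of_mem_right {u : 𝓐} (hu : u ∈ A') : eD hcompl D u = u := by
  rw [eD_eq_add, Submodule.projectionOnto_apply_of_mem_right hcompl hu, map_zero,
    Submodule.coe_zero, add_zero]

theorem eDinv_of_mem_right {u : 𝓐} (hu : u ∈ A') : eDinv hcompl D u = u := by
  rw [eDinv_eq_sub, Submodule.projectionOnto_apply_of_mem_right hcompl hu, map_zero,
    Submodule.coe_zero, sub_zero]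

noncomputable def eDEquiv : 𝓐 ≃ₗ[K] 𝓐 where
  toFun := eD hcompl D
  invFun := eDinv hcompl D
  map_add' a b := by simp only [eD_eq_add, map_add, Submodule.coe_add]; abel
  map_smul' c a := by
    simp only [eD_eq_add, map_smul, Submodule.coe_smul, RingHom.id_apply, smul_add]
  left_inv := eDinv_eD hcompl D
  right_inv := eD_eDinv hcompl D

theorem coe_eDEquiv : ⇑(eDEquiv hcompl D) = eD hcompl D := rfl

variable (m : 𝓐 →ₗ[K] 𝓐 →ₗ[K] 𝓐)

theorem eD_OmegaD (a b : 𝓐) :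
    eD hcompl D (OmegaD m hcompl D a b) = m (eD hcompl D a) (eD hcompl D b) :=
  eD_eDinv hcompl D _

theorem OmegaD_assoc (assoc : ∀ a b c : 𝓐, m (m a b) c = m a (m b c)) (a b c : 𝓐) :
    OmegaD m hcompl D (OmegaD m hcompl D a b) c = OmegaD m hcompl D a (OmegaD m hcompl D b c) := by
  apply (eDEquiv hcompl D).injective
  simp only [coe_eDEquiv, eD_OmegaD, assoc]

theorem OmegaD_mem_right (hA' : ∀ u ∈ A', ∀ v ∈ A', m u v ∈ A') {u v : 𝓐} (hu : u ∈ A')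
    (hv : v ∈ A') : OmegaD m hcompl D u v ∈ A' := by
  rw [OmegaD, eD_of_mem_right hcompl D hu, eD_of_mem_right hcompl D hv,
    eDinv_of_mem_right hcompl D (hA' u hu v hv)]
  exact hA' u hu v hv

end TwistByD

theorem stmt10 {K 𝓐 : Type*} [Field K] [AddCommGroup 𝓐] [Module K 𝓐]
    (m : 𝓐 →ₗ[K] 𝓐 →ₗ[K] 𝓐)
    (assoc : ∀ a b c : 𝓐, m (m a b) c = m a (m b c))
    (A A' : Submodule K 𝓐) (hcompl : IsCompl A A')
    (hA' : ∀ u ∈ A', ∀ v ∈ A', m u v ∈ A')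
    (D : A →ₗ[K] A') :
    (IsLinearMap K (eD hcompl D) ∧ Function.Bijective (eD hcompl D) ∧
      (∀ a : 𝓐, eDinv hcompl D (eD hcompl D a) = a) ∧
      (∀ a : 𝓐, eD hcompl D (eDinv hcompl D a) = a)) ∧
    (∀ a b c : 𝓐,
      OmegaD m hcompl D (OmegaD m hcompl D a b) c
        = OmegaD m hcompl D a (OmegaD m hcompl D b c)) ∧
    (∀ a b : 𝓐, eD hcompl D (OmegaD m hcompl D a b) = m (eD hcompl D a) (eD hcompl D b)) ∧
    (∀ u ∈ A', ∀ v ∈ A', OmegaD m hcompl D u v ∈ A') :=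
  ⟨⟨(eDEquiv hcompl D).toLinearMap.isLinear, (eDEquiv hcompl D).bijective,
      eDinv_eD hcompl D, eD_eDinv hcompl D⟩,
    OmegaD_assoc hcompl D m assoc, eD_OmegaD hcompl D m,
    fun _ hu _ hv => OmegaD_mem_right hcompl D m hA' hu hv⟩
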